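/- Let d ≥ 2 and let G = (V,E) be a finite simple graph with at least d+1 vertices. Then a(G, ℓ∞^d) = max over all monochrome subgraph decompositions (G₁, …, G_d) ∈ M(G, ℓ∞^d) of min_{i ∈ {1,…,d}} a(G_i). -/

import Mathlib

open scoped Classical
open Matrix

noncomputable section

/-- The list of eigenvalues (roots of the characteristic polynomial, with multiplicity)
of a real matrix, sorted in nondecreasing order. -/
def sortedEigs {m : Type*} [Fintype m] [DecidableEq m] (A : Matrix m m ℝ) : List ℝ :=
  A.charpoly.roots.sort (· ≤ ·)

/-- `eigval A j` is the `j`-th smallest eigenvalue `λ_j(A)` (1-based, with multiplicity). -/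
def eigval {m : Type*} [Fintype m] [DecidableEq m] (A : Matrix m m ℝ) (j : ℕ) : ℝ :=
  (sortedEigs A).getD (j - 1) 0

variable {V : Type*} [Fintype V] [DecidableEq V]

/-- `p` is an ℓ∞-framework position for `G` (i.e. `p ∈ W(G, ℓ∞^d)`): along each edge the
difference of the endpoints is nonzero and has a unique coordinate of maximal absolute
value. -/
def IsLinfPos {d : ℕ} (G : SimpleGraph V) (p : V → Fin d → ℝ) : Prop :=
  ∀ ⦃v w : V⦄, G.Adj v w → p v ≠ p w ∧
    ∃ i : Fin d, ∀ j : Fin d, j ≠ i → |p v j - p w j| < |p v i - p w i|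

/-- The `i`-th monochrome subgraph of the framework `(G, p)` in `ℓ∞^d`: the spanning
subgraph of `G` whose edges are those on which the `i`-th coordinate of the difference of
the endpoints has maximal absolute value. -/
def mono {d : ℕ} (G : SimpleGraph V) (p : V → Fin d → ℝ) (i : Fin d) : SimpleGraph V where
  Adj v w := G.Adj v w ∧ ∀ j : Fin d, |p v j - p w j| ≤ |p v i - p w i|
  symm := by
    refine ⟨fun v w h => ?_⟩
    refine ⟨h.1.symm, fun j => ?_⟩
    rw [abs_sub_comm (p w j), abs_sub_comm (p w i)]
    exact h.2 j
  loopless := ⟨fun v h => G.irrefl h.1⟩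

/-- The rigidity matrix `R(G,p)` of a framework in `ℓ∞^d`, with rows indexed by edges and
columns indexed by vertex-coordinate pairs: the row of an edge `vw ∈ E_i` has entry
`sgn((p v − p w) i)` in column `(v, i)`, entry `−sgn((p v − p w) i) = sgn((p w − p v) i)`
in column `(w, i)`, and zeros elsewhere. -/
def rigidity {d : ℕ} (G : SimpleGraph V) (p : V → Fin d → ℝ) :
    Matrix G.edgeSet (V × Fin d) ℝ := fun e vi =>
  if h : vi.1 ∈ (e : Sym2 V) then
    if (mono G p vi.2).Adj vi.1 (Sym2.Mem.other h) then
      Real.sign (p vi.1 vi.2 - p (Sym2.Mem.other h) vi.2)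
    else 0
  else 0

/-- The framework Laplacian `L(G,p) = R(G,p)ᵀ R(G,p)` of a framework in `ℓ∞^d`. -/
def fLap {d : ℕ} (G : SimpleGraph V) (p : V → Fin d → ℝ) :
    Matrix (V × Fin d) (V × Fin d) ℝ :=
  (rigidity G p)ᵀ * rigidity G p

/-- The algebraic connectivity (Fiedler number) `a(H) = λ₂(L(H))` of a finite simple
graph. -/
def algConn (H : SimpleGraph V) : ℝ := eigval (H.lapMatrix ℝ) 2

/-- The algebraic connectivity of `G` in `ℓ∞^d`:
`a(G, ℓ∞^d) = sup { λ_{d+1}(L(G,p)) : p ∈ W(G, ℓ∞^d) }`. -/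
def algConnLinf (d : ℕ) (G : SimpleGraph V) : ℝ :=
  sSup {t : ℝ | ∃ p : V → Fin d → ℝ, IsLinfPos G p ∧ t = eigval (fLap G p) (d + 1)}

end

/-! On an ℓ∞-framework position every edge has exactly one colour, so the framework Laplacian
is the block-diagonal matrix of the Laplacians of the monochrome subgraphs and its spectrum is
the union of theirs. Each block contributes the eigenvalue `0` and its other eigenvalues are at
least its algebraic connectivity, so the `(d+1)`-st smallest eigenvalue is `minᵢ a(Gᵢ)`. The
supremum over positions thus ranges over the finitely many monochrome decompositions and is
attained. -/

theorem List.Pairwise.getElem_iff_lt_countP {α : Type*} [Preorder α] {l : List α}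
    (hl : l.Pairwise (· ≤ ·)) {P : α → Prop} [DecidablePred P]
    (hP : ∀ ⦃a b⦄, a ≤ b → P b → P a) {k : ℕ} (hk : k < l.length) :
    P l[k] ↔ k < l.countP P := by
  induction l generalizing k with
  | nil => simp at hk
  | cons a t ih =>
    rw [List.pairwise_cons] at hl
    by_cases ha : P a
    · cases k with
      | zero => simp [ha]
      | succ k => simp [ha, ih hl.2 (by simpa using hk)]
    · have ht : ∀ b ∈ t, ¬ P b := fun b hb hPb => ha (hP (hl.1 b hb) hPb)
      have : t.countP P = 0 := List.countP_eq_zero.2 (by simpa using ht)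
      cases k with
      | zero => simp [ha, this]
      | succ k => simp [ha, this, ht _ (List.getElem_mem _)]

theorem Multiset.getElem_sort_iff_lt_countP {α : Type*} [LinearOrder α] (s : Multiset α)
    {P : α → Prop} [DecidablePred P]
    (hP : ∀ ⦃a b⦄, a ≤ b → P b → P a) {k : ℕ} (hk : k < (s.sort (· ≤ ·)).length) :
    P (s.sort (· ≤ ·))[k] ↔ k < s.countP P := by
  conv_rhs => rw [← s.sort_eq (· ≤ ·), Multiset.coe_countP]
  exact (s.pairwise_sort _).getElem_iff_lt_countP hP hk

theorem Multiset.countP_bind_univ {ι α : Type*} [Fintype ι] (f : ι → Multiset α) (P : α → Prop)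
    [DecidablePred P] :
    (Finset.univ.val.bind f).countP P = ∑ i, (f i).countP P := by
  simp only [Multiset.countP_eq_card_filter, Multiset.filter_bind, Multiset.card_bind]
  rfl

theorem Matrix.charpoly_blockDiagonal {m o R : Type*} [Fintype m] [DecidableEq m] [Fintype o]
    [DecidableEq o] [CommRing R] (M : o → Matrix m m R) :
    (blockDiagonal M).charpoly = ∏ i, (M i).charpoly := by
  have : charmatrix (blockDiagonal M) = blockDiagonal fun i => charmatrix (M i) := by
    ext ⟨v, i⟩ ⟨w, j⟩
    by_cases hij : i = j
    · subst hij
      by_cases hvw : v = w <;> simp [hvw]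
    · rw [charmatrix_apply_ne _ _ _ (by simp [hij]), blockDiagonal_apply_ne _ _ _ hij,
        blockDiagonal_apply_ne _ _ _ hij, map_zero, neg_zero]
  rw [Matrix.charpoly, this, det_blockDiagonal]
  rfl

theorem eigval_succ {m : Type*} [Fintype m] [DecidableEq m] (A : Matrix m m ℝ) {k : ℕ}
    (hk : k < (sortedEigs A).length) : eigval A (k + 1) = (sortedEigs A)[k] :=
  List.getD_eq_getElem _ _ hk

theorem getElem_sortedEigs_le_iff {m : Type*} [Fintype m] [DecidableEq m] (A : Matrix m m ℝ)
    {k : ℕ} (hk : k < (sortedEigs A).length) (x : ℝ) :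
    (sortedEigs A)[k] ≤ x ↔ k < A.charpoly.roots.countP (· ≤ x) :=
  Multiset.getElem_sort_iff_lt_countP _ (fun _ _ hab hb => hab.trans hb) hk

theorem getElem_sortedEigs_lt_iff {m : Type*} [Fintype m] [DecidableEq m] (A : Matrix m m ℝ)
    {k : ℕ} (hk : k < (sortedEigs A).length) (x : ℝ) :
    (sortedEigs A)[k] < x ↔ k < A.charpoly.roots.countP (· < x) :=
  Multiset.getElem_sort_iff_lt_countP _ (fun _ _ hab hb => hab.trans_lt hb) hk

namespace SimpleGraph
variable {V : Type*} [Fintype V] [DecidableEq V] (H : SimpleGraph V)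

theorem roots_charpoly_lapMatrix :
    (H.lapMatrix ℝ).charpoly.roots =
      Finset.univ.val.map (H.isHermitian_lapMatrix ℝ).eigenvalues := by
  simp [(H.isHermitian_lapMatrix ℝ).roots_charpoly_eq_eigenvalues]

theorem card_roots_charpoly_lapMatrix :
    Multiset.card (H.lapMatrix ℝ).charpoly.roots = Fintype.card V := by
  simp [roots_charpoly_lapMatrix]

theorem nonneg_of_mem_roots_charpoly_lapMatrix {x : ℝ}
    (hx : x ∈ (H.lapMatrix ℝ).charpoly.roots) : 0 ≤ x := by
  obtain ⟨i, -, rfl⟩ := Multiset.mem_map.1 (by rwa [roots_charpoly_lapMatrix] at hx)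
  exact (H.posSemidef_lapMatrix ℝ).eigenvalues_nonneg i

theorem zero_mem_roots_charpoly_lapMatrix [Nonempty V] :
    (0 : ℝ) ∈ (H.lapMatrix ℝ).charpoly.roots := by
  have := H.det_lapMatrix_eq_zero
  rw [(H.isHermitian_lapMatrix ℝ).det_eq_prod_eigenvalues, Finset.prod_eq_zero_iff] at this
  obtain ⟨i, -, hi⟩ := this
  rw [roots_charpoly_lapMatrix]
  exact Multiset.mem_map.2 ⟨i, Finset.mem_univ _, by simpa using hi⟩

omit [DecidableEq V] in
theorem sum_edgeSet_eq_sum_neighborFinset {M : Type*} [AddCommMonoid M] (G : SimpleGraph V)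
    (v : V) (f : G.edgeSet → M) (F : V → M) (hf : ∀ e : G.edgeSet, v ∉ (e : Sym2 V) → f e = 0)
    (hfF : ∀ (e : G.edgeSet) (b : V), (e : Sym2 V) = s(v, b) → f e = F b) :
    ∑ e, f e = ∑ b ∈ G.neighborFinset v, F b := by
  have hv (e : G.edgeSet) (he : f e ≠ 0) : v ∈ (e : Sym2 V) := by_contra fun h => he (hf e h)
  refine Finset.sum_bij_ne_zero (fun e _ he => Sym2.Mem.other (hv e he)) (fun e _ he => ?_)
    (fun e₁ _ he₁ e₂ _ he₂ h => ?_) (fun b hb hFb => ?_)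
    (fun e _ he => hfF e _ (Sym2.other_spec (hv e he)).symm)
  · rw [mem_neighborFinset, ← mem_edgeSet, Sym2.other_spec]
    exact e.2
  · apply Subtype.ext
    rw [← Sym2.other_spec (hv e₁ he₁), ← Sym2.other_spec (hv e₂ he₂), h]
  · have hvb : G.Adj v b := (mem_neighborFinset _ _ _).1 hb
    have hfe := hfF ⟨s(v, b), hvb⟩ b rfl
    refine ⟨⟨s(v, b), hvb⟩, Finset.mem_univ _, hfe ▸ hFb, ?_⟩
    exact Sym2.congr_right.1 (Sym2.other_spec (hv _ (hfe ▸ hFb)))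

theorem lapMatrix_apply_eq_sum (H : SimpleGraph V) (v w : V) :
    H.lapMatrix ℝ v w =
      ∑ b, if H.Adj v b then (if w = v then 1 else 0) - (if w = b then 1 else 0) else 0 := by
  have hsplit (b : V) :
      (if H.Adj v b then (if w = v then (1 : ℝ) else 0) - (if w = b then 1 else 0) else 0) =
        (if H.Adj v b then 1 else 0) * (if w = v then 1 else 0) -
          if w = b then (if H.Adj v b then 1 else 0) else 0 := by
    split_ifs <;> simp
  rw [Finset.sum_congr rfl fun b _ => hsplit b, Finset.sum_sub_distrib, ← Finset.sum_mul,
    ← degree_eq_sum_if_adj, Finset.sum_ite_eq, if_pos (Finset.mem_univ _), lapMatrix,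
    Matrix.sub_apply, degMatrix, diagonal_apply, adjMatrix_apply]
  by_cases h : v = w <;> simp [h, eq_comm]

theorem length_sortedEigs_lapMatrix :
    (sortedEigs (H.lapMatrix ℝ)).length = Fintype.card V := by
  rw [sortedEigs, Multiset.length_sort, H.card_roots_charpoly_lapMatrix]

theorem countP_roots_charpoly_lapMatrix_le_pos [Nonempty V] {x : ℝ} (hx : 0 ≤ x) :
    0 < (H.lapMatrix ℝ).charpoly.roots.countP (· ≤ x) :=
  Multiset.countP_pos.2 ⟨0, H.zero_mem_roots_charpoly_lapMatrix, hx⟩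

end SimpleGraph

section AlgConn
variable {V : Type*} [Fintype V] [DecidableEq V] {H : SimpleGraph V} (hV : 2 ≤ Fintype.card V)
include hV

theorem one_lt_length_sortedEigs_lapMatrix : 1 < (sortedEigs (H.lapMatrix ℝ)).length := by
  rw [H.length_sortedEigs_lapMatrix]; omega

theorem algConn_eq_getElem :
    algConn H = (sortedEigs (H.lapMatrix ℝ))[1]'(one_lt_length_sortedEigs_lapMatrix hV) :=
  eigval_succ _ _

theorem algConn_nonneg : 0 ≤ algConn H := by
  rw [algConn_eq_getElem hV]
  exact H.nonneg_of_mem_roots_charpoly_lapMatrix ((Multiset.mem_sort _).1 (List.getElem_mem _))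

theorem countP_roots_charpoly_lapMatrix_lt_le_one {x : ℝ} (hx : x ≤ algConn H) :
    (H.lapMatrix ℝ).charpoly.roots.countP (· < x) ≤ 1 := by
  rw [← not_lt, ← getElem_sortedEigs_lt_iff _ (one_lt_length_sortedEigs_lapMatrix hV), not_lt,
    ← algConn_eq_getElem hV]
  exact hx

theorem one_lt_countP_roots_charpoly_lapMatrix_le {x : ℝ} (hx : algConn H ≤ x) :
    1 < (H.lapMatrix ℝ).charpoly.roots.countP (· ≤ x) := by
  rwa [← getElem_sortedEigs_le_iff _ (one_lt_length_sortedEigs_lapMatrix hV),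
    ← algConn_eq_getElem hV]

end AlgConn

section Framework
variable {V : Type*} {d : ℕ} {G : SimpleGraph V} {p : V → Fin d → ℝ} {i j : Fin d} {v w : V}

namespace IsLinfPos

theorem eq_of_mono_adj (hp : IsLinfPos G p) (hi : (mono G p i).Adj v w)
    (hj : (mono G p j).Adj v w) : i = j := by
  obtain ⟨-, k, hk⟩ := hp hi.1
  have (l : Fin d) (hl : (mono G p l).Adj v w) : l = k :=
    by_contra fun hlk => (hk l hlk).not_ge (hl.2 k)
  rw [this i hi, this j hj]

theorem sub_ne_zero_of_mono_adj (hp : IsLinfPos G p) (h : (mono G p i).Adj v w) :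
    p v i - p w i ≠ 0 := by
  intro hi
  refine (hp h.1).1 (funext fun j => sub_eq_zero.1 (abs_nonpos_iff.1 ?_))
  simpa [hi] using h.2 j

end IsLinfPos

theorem exists_isLinfPos [Fintype V] (G : SimpleGraph V) (hd : 0 < d) :
    ∃ p : V → Fin d → ℝ, IsLinfPos G p := by
  let i₀ : Fin d := ⟨0, hd⟩
  refine ⟨fun v => Pi.single i₀ (Fintype.equivFin V v : ℝ), fun v w hvw => ?_⟩
  have hne : ((Fintype.equivFin V v : ℕ) : ℝ) ≠ (Fintype.equivFin V w : ℕ) := by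
    simpa [Fin.val_inj] using hvw.ne
  refine ⟨fun h => hne (by simpa using congr_fun h i₀), i₀, fun j hj => ?_⟩
  simpa [hj, sub_eq_zero] using hne

variable [DecidableEq V]

theorem rigidity_apply_of_not_mem {e : G.edgeSet} (hv : v ∉ (e : Sym2 V)) (i : Fin d) :
    rigidity G p e (v, i) = 0 := by
  rw [rigidity, dif_neg hv]

theorem rigidity_apply_left {e : G.edgeSet} (he : (e : Sym2 V) = s(v, w)) (i : Fin d) :
    rigidity G p e (v, i) = if (mono G p i).Adj v w then Real.sign (p v i - p w i) else 0 := by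
  have hv : v ∈ (e : Sym2 V) := he ▸ Sym2.mem_mk_left v w
  have hvw : v ≠ w := G.ne_of_adj (G.mem_edgeSet.1 (he ▸ e.2))
  obtain rfl : Sym2.Mem.other hv = w := by
    rcases Sym2.eq_iff.1 ((Sym2.other_spec hv).trans he) with ⟨-, h⟩ | ⟨h, -⟩
    exacts [h, absurd h hvw]
  rw [rigidity, dif_pos hv]

theorem rigidity_apply {e : G.edgeSet} (he : (e : Sym2 V) = s(v, w)) (u : V) (i : Fin d) :
    rigidity G p e (u, i) = if (mono G p i).Adj v w then
      Real.sign (p v i - p w i) * ((if u = v then 1 else 0) - (if u = w then 1 else 0)) else 0 := by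
  have hvw : v ≠ w := G.ne_of_adj (G.mem_edgeSet.1 (he ▸ e.2))
  by_cases huv : u = v
  · subst huv
    simp [rigidity_apply_left he, hvw]
  by_cases huw : u = w
  · subst huw
    rw [rigidity_apply_left (he.trans Sym2.eq_swap), ← neg_sub, Real.sign_neg]
    simp [huv, (mono G p i).adj_comm]
  · rw [rigidity_apply_of_not_mem (by simp [he, huv, huw])]
    simp [huv, huw]

theorem IsLinfPos.rigidity_mul_rigidity (hp : IsLinfPos G p) {e : G.edgeSet}
    (he : (e : Sym2 V) = s(v, w)) (u : V) (i j : Fin d) :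
    rigidity G p e (v, i) * rigidity G p e (u, j) = if i = j ∧ (mono G p i).Adj v w then
      (if u = v then 1 else 0) - (if u = w then 1 else 0) else 0 := by
  have hvw : v ≠ w := G.ne_of_adj (G.mem_edgeSet.1 (he ▸ e.2))
  rw [rigidity_apply he, rigidity_apply he]
  by_cases hi : (mono G p i).Adj v w
  · by_cases hj : (mono G p j).Adj v w
    · obtain rfl := hp.eq_of_mono_adj hi hj
      rcases Real.sign_apply_eq_of_ne_zero _ (hp.sub_ne_zero_of_mono_adj hi) with h | h <;>
        simp [hi, h, hvw]
    · have hij : i ≠ j := fun h => hj (h ▸ hi)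
      simp [hi, hj, hij]
  · simp [hi]

variable [Fintype V]

theorem IsLinfPos.fLap_eq_blockDiagonal (hp : IsLinfPos G p) :
    fLap G p = blockDiagonal fun i => (mono G p i).lapMatrix ℝ := by
  ext ⟨v, i⟩ ⟨w, j⟩
  rw [fLap, mul_apply]
  simp only [transpose_apply]
  rw [G.sum_edgeSet_eq_sum_neighborFinset v _ _ (fun e hv => by
      rw [rigidity_apply_of_not_mem hv, zero_mul])
    (fun e b he => hp.rigidity_mul_rigidity he w i j)]
  rw [Finset.sum_subset (Finset.subset_univ _) fun b _ hb => by
    have : ¬(mono G p i).Adj v b := fun h => hb ((G.mem_neighborFinset v b).2 h.1)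
    simp [this]]
  by_cases hij : i = j
  · subst hij
    simp [blockDiagonal_apply_eq, SimpleGraph.lapMatrix_apply_eq_sum]
  · simp [hij, blockDiagonal_apply_ne _ _ _ hij]

theorem IsLinfPos.roots_charpoly_fLap (hp : IsLinfPos G p) :
    (fLap G p).charpoly.roots =
      Finset.univ.val.bind fun i => ((mono G p i).lapMatrix ℝ).charpoly.roots := by
  rw [hp.fLap_eq_blockDiagonal, charpoly_blockDiagonal, Polynomial.roots_prod]
  exact Finset.prod_ne_zero_iff.2 fun i _ => (charpoly_monic _).ne_zero

theorem IsLinfPos.eigval_fLap (hp : IsLinfPos G p) (hd : 0 < d) (hV : 2 ≤ Fintype.card V) :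
    eigval (fLap G p) (d + 1) = ⨅ i, algConn (mono G p i) := by
  have : Nonempty (Fin d) := ⟨⟨0, hd⟩⟩
  have : Nonempty V := Fintype.card_pos_iff.1 (by omega)
  obtain ⟨i₀, hi₀⟩ := Finite.exists_min fun i => algConn (mono G p i)
  set m := algConn (mono G p i₀)
  have hinf : ⨅ i, algConn (mono G p i) = m :=
    le_antisymm (ciInf_le (Finite.bddBelow_range _) i₀) (le_ciInf hi₀)
  have hlen : d < (sortedEigs (fLap G p)).length := by
    rw [sortedEigs, Multiset.length_sort, hp.roots_charpoly_fLap, Multiset.card_bind]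
    simp [SimpleGraph.card_roots_charpoly_lapMatrix]
    nlinarith
  have hm : 0 ≤ m := algConn_nonneg hV
  rw [hinf, eigval_succ _ hlen]
  -- At least `d + 1` eigenvalues are `≤ m` (a zero from each block, and `m` itself), and at
  -- most `d` are `< m` (at most one per block).
  apply le_antisymm
  · rw [getElem_sortedEigs_le_iff _ hlen, hp.roots_charpoly_fLap, Multiset.countP_bind_univ]
    calc d = ∑ _i : Fin d, 1 := by simp
      _ < _ := Finset.sum_lt_sum
        (fun i _ => (mono G p i).countP_roots_charpoly_lapMatrix_le_pos hm)
        ⟨i₀, Finset.mem_univ _, one_lt_countP_roots_charpoly_lapMatrix_le hV le_rfl⟩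
  · rw [← not_lt, getElem_sortedEigs_lt_iff _ hlen, hp.roots_charpoly_fLap,
      Multiset.countP_bind_univ, not_lt]
    calc _ ≤ ∑ _i : Fin d, 1 := Finset.sum_le_sum fun i _ =>
          countP_roots_charpoly_lapMatrix_lt_le_one hV (hi₀ i)
      _ = d := by simp

end Framework

/-- For `d ≥ 2` and a finite simple graph `G` with at least `d+1` vertices, the algebraic
connectivity of `G` in `ℓ∞^d` equals the maximum over all monochrome subgraph
decompositions `(G₁, …, G_d) ∈ M(G, ℓ∞^d)` of `min_{i} a(Gᵢ)`. -/
theorem algConnLinf_eq_max_min {V : Type*} [Fintype V] [DecidableEq V] {d : ℕ}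
    (hd : 2 ≤ d) (G : SimpleGraph V) (hV : d + 1 ≤ Fintype.card V) :
    IsGreatest
      {t : ℝ | ∃ p : V → Fin d → ℝ, IsLinfPos G p ∧
        t = ⨅ i : Fin d, algConn (mono G p i)}
      (algConnLinf d G) := by
  set S := {t : ℝ | ∃ p : V → Fin d → ℝ, IsLinfPos G p ∧ t = ⨅ i : Fin d, algConn (mono G p i)}
  have hS : {t : ℝ | ∃ p : V → Fin d → ℝ, IsLinfPos G p ∧ t = eigval (fLap G p) (d + 1)} = S :=
    Set.ext fun t => exists_congr fun p => and_congr_right fun hp => by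
      rw [hp.eigval_fLap (by omega) (by omega)]
  have hfin : S.Finite := (Set.finite_range fun H : Fin d → SimpleGraph V =>
    ⨅ i, algConn (H i)).subset (by rintro _ ⟨p, -, rfl⟩; exact ⟨_, rfl⟩)
  obtain ⟨p, hp⟩ := exists_isLinfPos G (by omega : 0 < d)
  rw [algConnLinf, hS]
  exact hfin.isCompact.isGreatest_sSup ⟨_, p, hp, rfl⟩
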